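/- arXiv:2408.08382 — 2 statements merged into one kernel-verified Lean document; each statement's English description precedes it below -/
import Mathlib

section
/- There exists a constant c > 0 such that every digraph G on n ≥ 2 vertices satisfies CC(G) ≤ c · (n / log n) · MAIS(G). -/
/-- A digraph: a finite vertex set (a finset of naturals) together with an
irreflexive edge relation. -/
structure Digr where
  verts : Finset ℕ
  Adj : ℕ → ℕ → Prop
  loopless : ∀ v, ¬ Adj v v

namespace Digr

/-- A clique of a digraph: a set of vertices every two distinct members of which
are joined by directed edges in both directions. -/
def IsClique (G : Digr) (C : Finset ℕ) : Prop :=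
  C ⊆ G.verts ∧ ∀ u ∈ C, ∀ v ∈ C, u ≠ v → G.Adj u v ∧ G.Adj v u

/-- An acyclic set of a digraph: a set of vertices inducing a sub-digraph with
no directed cycle. -/
def IsAcyclicSet (G : Digr) (I : Finset ℕ) : Prop :=
  I ⊆ G.verts ∧ ∀ v, ¬ Relation.TransGen (fun a b => a ∈ I ∧ b ∈ I ∧ G.Adj a b) v v

/-- MAIS: the maximum size of an acyclic set. -/
noncomputable def mais (G : Digr) : ℕ :=
  sSup {k | ∃ I, G.IsAcyclicSet I ∧ I.card = k}

/-- ω: the maximum size of a clique. -/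
noncomputable def cliqueNum (G : Digr) : ℕ :=
  sSup {k | ∃ C, G.IsClique C ∧ C.card = k}

/-- CC: the directed clique cover number, i.e. the minimum number of cliques
whose union is the vertex set. -/
noncomputable def cc (G : Digr) : ℕ :=
  sInf {k | ∃ 𝒞 : Finset (Finset ℕ), 𝒞.card = k ∧ (∀ C ∈ 𝒞, G.IsClique C) ∧
    ∀ v ∈ G.verts, ∃ C ∈ 𝒞, v ∈ C}

/-- The sub-digraph induced by a set of vertices. -/
def induce (G : Digr) (S : Finset ℕ) : Digr where
  verts := S ∩ G.verts
  Adj := fun a b => a ∈ S ∧ b ∈ S ∧ G.Adj a b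
  loopless := fun v h => G.loopless v h.2.2

/-- A family of digraphs is hereditary if it is closed under taking induced
sub-digraphs. -/
def Hereditary (𝒢 : Set Digr) : Prop :=
  ∀ G ∈ 𝒢, ∀ S ⊆ G.verts, G.induce S ∈ 𝒢

-- helper lemmas

lemma noTransGen {r : ℕ → ℕ → Prop} (h : ∀ a b, ¬ r a b) (v w : ℕ) :
    ¬ Relation.TransGen r v w := by
  intro ht
  induction ht with
  | single h' => exact h _ _ h'
  | tail _ h' _ => exact h _ _ h'

lemma acyclic_empty (G : Digr) : G.IsAcyclicSet ∅ := by
  refine ⟨Finset.empty_subset _, fun v => noTransGen (fun a b hab => ?_) v v⟩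
  exact absurd hab.1 (Finset.notMem_empty a)

lemma acyclic_singleton (G : Digr) {v : ℕ} (hv : v ∈ G.verts) : G.IsAcyclicSet {v} := by
  refine ⟨Finset.singleton_subset_iff.2 hv, fun w => noTransGen (fun a b hab => ?_) w w⟩
  obtain ⟨ha, hb, hadj⟩ := hab
  rw [Finset.mem_singleton] at ha hb
  subst ha hb
  exact G.loopless _ hadj

lemma bddAbove_mais (G : Digr) : BddAbove {k | ∃ I, G.IsAcyclicSet I ∧ I.card = k} := by
  refine ⟨G.verts.card, fun k hk => ?_⟩
  obtain ⟨I, hI, rfl⟩ := hk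
  exact Finset.card_le_card hI.1

lemma card_le_mais {G : Digr} {I : Finset ℕ} (hI : G.IsAcyclicSet I) : I.card ≤ G.mais :=
  le_csSup G.bddAbove_mais ⟨I, hI, rfl⟩

lemma one_le_mais {G : Digr} (h : G.verts.Nonempty) : 1 ≤ G.mais := by
  obtain ⟨v, hv⟩ := h
  simpa using card_le_mais (G.acyclic_singleton hv)

lemma cc_le_of_cover {G : Digr} {𝒞 : Finset (Finset ℕ)} (h1 : ∀ C ∈ 𝒞, G.IsClique C)
    (h2 : ∀ v ∈ G.verts, ∃ C ∈ 𝒞, v ∈ C) : G.cc ≤ 𝒞.card :=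
  Nat.sInf_le ⟨𝒞, rfl, h1, h2⟩

lemma cover_exists (G : Digr) : ∃ 𝒞 : Finset (Finset ℕ), 𝒞.card = G.cc ∧
    (∀ C ∈ 𝒞, G.IsClique C) ∧ ∀ v ∈ G.verts, ∃ C ∈ 𝒞, v ∈ C := by
  have hne : {k | ∃ 𝒞 : Finset (Finset ℕ), 𝒞.card = k ∧ (∀ C ∈ 𝒞, G.IsClique C) ∧
      ∀ v ∈ G.verts, ∃ C ∈ 𝒞, v ∈ C}.Nonempty := by
    refine ⟨(G.verts.image fun v => ({v} : Finset ℕ)).card, _, rfl, ?_, ?_⟩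
    · intro C hC
      obtain ⟨v, hv, rfl⟩ := Finset.mem_image.1 hC
      exact ⟨Finset.singleton_subset_iff.2 hv, by simp (config := {contextual := true})⟩
    · intro v hv
      exact ⟨{v}, Finset.mem_image_of_mem _ hv, Finset.mem_singleton_self v⟩
  exact Nat.sInf_mem hne

lemma cc_le_card (G : Digr) : G.cc ≤ G.verts.card := by
  calc G.cc ≤ (G.verts.image fun v => ({v} : Finset ℕ)).card := by
        refine cc_le_of_cover ?_ ?_
        · intro C hC
          obtain ⟨v, hv, rfl⟩ := Finset.mem_image.1 hC
          exact ⟨Finset.singleton_subset_iff.2 hv, by simp (config := {contextual := true})⟩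
        · intro v hv
          exact ⟨{v}, Finset.mem_image_of_mem _ hv, Finset.mem_singleton_self v⟩
    _ ≤ G.verts.card := Finset.card_image_le

lemma induce_clique {G : Digr} {S C : Finset ℕ} (h : (G.induce S).IsClique C) :
    G.IsClique C := by
  refine ⟨h.1.trans (Finset.inter_subset_right), fun u hu v hv huv => ?_⟩
  obtain ⟨h1, h2⟩ := h.2 u hu v hv huv
  exact ⟨h1.2.2, h2.2.2⟩

lemma induce_mais_le (G : Digr) (S : Finset ℕ) : (G.induce S).mais ≤ G.mais := by
  refine csSup_le ⟨0, ∅, (G.induce S).acyclic_empty, Finset.card_empty⟩ fun k hk => ?_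
  obtain ⟨I, hI, rfl⟩ := hk
  refine card_le_mais ⟨hI.1.trans Finset.inter_subset_right, fun v hv => hI.2 v ?_⟩
  refine Relation.TransGen.mono (fun a b hab => ?_) v v hv
  exact ⟨hab.1, hab.2.1, (Finset.mem_inter.1 (hI.1 hab.1)).1,
    (Finset.mem_inter.1 (hI.1 hab.2.1)).1, hab.2.2⟩

lemma acyclic_of_list {G : Digr} {l : List ℕ} (hn : l.Nodup) (hv : ∀ x ∈ l, x ∈ G.verts)
    (hp : l.Pairwise fun a b => ¬ G.Adj b a) : G.IsAcyclicSet l.toFinset := by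
  refine ⟨fun x hx => hv x (List.mem_toFinset.1 hx), fun v hcyc => ?_⟩
  have key : ∀ a b : ℕ, (a ∈ l.toFinset ∧ b ∈ l.toFinset ∧ G.Adj a b) →
      l.idxOf a < l.idxOf b := by
    rintro a b ⟨ha, hb, hadj⟩
    rw [List.mem_toFinset] at ha hb
    have hia : l.idxOf a < l.length := List.idxOf_lt_length_iff.2 ha
    have hib : l.idxOf b < l.length := List.idxOf_lt_length_iff.2 hb
    have hga : l.get ⟨l.idxOf a, hia⟩ = a := List.idxOf_get hia
    have hgb : l.get ⟨l.idxOf b, hib⟩ = b := List.idxOf_get hib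
    rcases lt_trichotomy (l.idxOf a) (l.idxOf b) with h | h | h
    · exact h
    · exfalso
      have : a = b := by rw [← hga, ← hgb]; congr 1; exact Fin.ext h
      subst this; exact G.loopless a hadj
    · exfalso
      have := List.pairwise_iff_get.1 hp ⟨l.idxOf b, hib⟩ ⟨l.idxOf a, hia⟩ h
      rw [hga, hgb] at this
      exact this hadj
  have : l.idxOf v < l.idxOf v := by
    have h2 : Relation.TransGen (fun a b : ℕ => l.idxOf a < l.idxOf b) v v :=
      Relation.TransGen.mono key v v hcyc
    have ht : Transitive (fun a b : ℕ => l.idxOf a < l.idxOf b) :=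
      fun _ _ _ h1 h2 => h1.trans h2
    haveI : IsTrans ℕ (fun a b : ℕ => l.idxOf a < l.idxOf b) := ⟨ht⟩
    rwa [Relation.transGen_eq_self] at h2
  omega

/-- Lift a "no back edges" list of an induced subgraph to the ambient digraph. -/
lemma list_lift {G : Digr} {S : Finset ℕ} {l : List ℕ} (hn : l.Nodup)
    (hv : ∀ x ∈ l, x ∈ (G.induce S).verts)
    (hp : l.Pairwise fun a b => ¬ (G.induce S).Adj b a) :
    (∀ x ∈ l, x ∈ G.verts) ∧ l.Pairwise fun a b => ¬ G.Adj b a := by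
  have hS : ∀ x ∈ l, x ∈ S := fun x hx => (Finset.mem_inter.1 (hv x hx)).1
  constructor
  · exact fun x hx => (Finset.mem_inter.1 (hv x hx)).2
  · refine hp.imp_of_mem fun {a b} ha hb h hadj => h ⟨hS b hb, hS a ha, hadj⟩

/-- Directed Ramsey: a digraph with at least `3 ^ (s + t)` vertices contains a
clique of size `s` or a "no back edges" ordered set of size `t`. -/
lemma ramsey : ∀ (k s t : ℕ) (G : Digr), s + t ≤ k → 3 ^ (s + t) ≤ G.verts.card →
    (∃ C, G.IsClique C ∧ s ≤ C.card) ∨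
    (∃ l : List ℕ, l.Nodup ∧ (∀ x ∈ l, x ∈ G.verts) ∧
      (l.Pairwise fun a b => ¬ G.Adj b a) ∧ t ≤ l.length) := by
  intro k
  induction k with
  | zero =>
    intro s t G hst _
    left
    exact ⟨∅, ⟨Finset.empty_subset _, by simp⟩, by omega⟩
  | succ k ih =>
    intro s t G hst hcard
    classical
    match s, t with
    | 0, t => exact Or.inl ⟨∅, ⟨Finset.empty_subset _, by simp⟩, le_refl _⟩
    | s + 1, 0 => exact Or.inr ⟨[], by simp⟩
    | s + 1, t + 1 =>
      have hpos : 0 < G.verts.card := lt_of_lt_of_le (by positivity) hcard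
      obtain ⟨v, hv⟩ := Finset.card_pos.1 hpos
      set V' := G.verts.erase v with hV'
      set D := V'.filter (fun u => G.Adj v u ∧ G.Adj u v) with hD
      set P := V'.filter (fun u => ¬ G.Adj u v) with hP
      set Q := V'.filter (fun u => G.Adj u v ∧ ¬ G.Adj v u) with hQ
      have hsub : V' ⊆ D ∪ P ∪ Q := by
        intro u hu
        simp only [hD, hP, hQ, Finset.mem_union, Finset.mem_filter]
        by_cases h1 : G.Adj u v
        · by_cases h2 : G.Adj v u
          · exact Or.inl (Or.inl ⟨hu, h2, h1⟩)
          · exact Or.inr ⟨hu, h1, h2⟩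
        · exact Or.inl (Or.inr ⟨hu, h1⟩)
      have hV'card : G.verts.card - 1 ≤ V'.card := by
        rw [hV', Finset.card_erase_of_mem hv]
      have hsum : 3 ^ (s + 1 + (t + 1)) - 1 ≤ D.card + P.card + Q.card := by
        calc 3 ^ (s + 1 + (t + 1)) - 1 ≤ G.verts.card - 1 := by omega
          _ ≤ V'.card := hV'card
          _ ≤ (D ∪ P ∪ Q).card := Finset.card_le_card hsub
          _ ≤ D.card + P.card + Q.card := by
              calc (D ∪ P ∪ Q).card ≤ (D ∪ P).card + Q.card := Finset.card_union_le _ _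
                _ ≤ D.card + P.card + Q.card := by
                    have := Finset.card_union_le D P; omega
      have hpow : 3 ^ (s + 1 + (t + 1)) = 3 * 3 ^ (s + t + 1) := by ring
      have hbig : 3 ^ (s + t + 1) ≤ D.card ∨ 3 ^ (s + t + 1) ≤ P.card ∨
          3 ^ (s + t + 1) ≤ Q.card := by
        by_contra h
        push_neg at h
        have h3 : 1 ≤ 3 ^ (s + t + 1) := Nat.one_le_pow _ _ (by norm_num)
        omega
      -- facts about sub-digraph vertex sets
      have hverts : ∀ T : Finset ℕ, T ⊆ G.verts → (G.induce T).verts = T :=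
        fun T hT => Finset.inter_eq_left.2 hT
      have hDsub : D ⊆ G.verts := (Finset.filter_subset _ _).trans (Finset.erase_subset _ _)
      have hPsub : P ⊆ G.verts := (Finset.filter_subset _ _).trans (Finset.erase_subset _ _)
      have hQsub : Q ⊆ G.verts := (Finset.filter_subset _ _).trans (Finset.erase_subset _ _)
      rcases hbig with hbD | hbP | hbQ
      · -- double-neighbourhood: recurse for a clique of size s, or a list of size t+1
        have := ih s (t + 1) (G.induce D) (by omega)
          (by rw [hverts D hDsub]; exact le_of_eq_of_le (by ring) hbD)
        rcases this with ⟨C, hC, hCs⟩ | ⟨l, hn, hlv, hlp, hll⟩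
        · left
          have hCD : C ⊆ D := hC.1.trans Finset.inter_subset_left
          have hvC : v ∉ C := fun h => Finset.notMem_erase v G.verts
            ((Finset.filter_subset _ _) (hCD h))
          refine ⟨insert v C, ⟨?_, ?_⟩, ?_⟩
          · exact Finset.insert_subset hv ((induce_clique hC).1)
          · intro a ha b hb hab
            rcases Finset.mem_insert.1 ha with rfl | ha'
            · rcases Finset.mem_insert.1 hb with rfl | hb'
              · exact absurd rfl hab
              · have := (Finset.mem_filter.1 (hCD hb')).2
                exact ⟨this.1, this.2⟩
            · rcases Finset.mem_insert.1 hb with rfl | hb'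
              · have := (Finset.mem_filter.1 (hCD ha')).2
                exact ⟨this.2, this.1⟩
              · exact (induce_clique hC).2 a ha' b hb' hab
          · rw [Finset.card_insert_of_notMem hvC]; omega
        · right
          obtain ⟨hlv', hlp'⟩ := list_lift hn hlv hlp
          exact ⟨l, hn, hlv', hlp', hll⟩
      · -- "no edge into v" part: recurse with (s+1, t), prepend v
        have := ih (s + 1) t (G.induce P) (by omega)
          (by rw [hverts P hPsub]; exact le_of_eq_of_le (by ring) hbP)
        rcases this with ⟨C, hC, hCs⟩ | ⟨l, hn, hlv, hlp, hll⟩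
        · exact Or.inl ⟨C, induce_clique hC, hCs⟩
        · right
          obtain ⟨hlv', hlp'⟩ := list_lift hn hlv hlp
          have hlP : ∀ x ∈ l, x ∈ P := fun x hx => (Finset.mem_inter.1 (hlv x hx)).1
          have hvl : v ∉ l := fun h => Finset.ne_of_mem_erase
            ((Finset.filter_subset _ _) (hlP v h)) rfl
          refine ⟨v :: l, List.nodup_cons.2 ⟨hvl, hn⟩, ?_, ?_, by simp; omega⟩
          · intro x hx
            rcases List.mem_cons.1 hx with rfl | hx'
            · exact hv
            · exact hlv' x hx'
          · refine List.pairwise_cons.2 ⟨fun b hb => ?_, hlp'⟩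
            exact (Finset.mem_filter.1 (hlP b hb)).2
      · -- "no edge from v" part: recurse with (s+1, t), append v
        have := ih (s + 1) t (G.induce Q) (by omega)
          (by rw [hverts Q hQsub]; exact le_of_eq_of_le (by ring) hbQ)
        rcases this with ⟨C, hC, hCs⟩ | ⟨l, hn, hlv, hlp, hll⟩
        · exact Or.inl ⟨C, induce_clique hC, hCs⟩
        · right
          obtain ⟨hlv', hlp'⟩ := list_lift hn hlv hlp
          have hlQ : ∀ x ∈ l, x ∈ Q := fun x hx => (Finset.mem_inter.1 (hlv x hx)).1
          have hvl : v ∉ l := fun h => Finset.ne_of_mem_erase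
            ((Finset.filter_subset _ _) (hlQ v h)) rfl
          refine ⟨l ++ [v], ?_, ?_, ?_, by simp; omega⟩
          · exact List.nodup_append.2 ⟨hn, List.nodup_singleton v,
              by simpa [List.Disjoint] using fun a ha (h : a = v) => hvl (h ▸ ha)⟩
          · intro x hx
            rcases List.mem_append.1 hx with hx' | hx'
            · exact hlv' x hx'
            · rw [List.mem_singleton.1 hx']; exact hv
          · refine List.pairwise_append.2 ⟨hlp', List.pairwise_singleton _ _, ?_⟩
            intro a ha b hb
            rw [List.mem_singleton.1 hb]
            exact (Finset.mem_filter.1 (hlQ a ha)).2.2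

/-- Greedy clique-cover bound: if `mais G ≤ a` then for any `s > 0`,
`cc G ≤ |V|/s + 3^(s+a+1)`. -/
lemma cc_bound (a s : ℕ) (hs : 0 < s) :
    ∀ n (G : Digr), G.verts.card ≤ n → G.mais ≤ a →
      G.cc ≤ G.verts.card / s + 3 ^ (s + a + 1) := by
  intro n
  induction n with
  | zero =>
    intro G hn _
    have h0 : G.verts.card = 0 := Nat.le_zero.1 hn
    calc G.cc ≤ G.verts.card := G.cc_le_card
      _ = 0 := h0
      _ ≤ _ := Nat.zero_le _
  | succ n ih =>
    intro G hn ha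
    by_cases hsmall : G.verts.card < 3 ^ (s + a + 1)
    · exact le_trans (le_trans G.cc_le_card hsmall.le) (Nat.le_add_left _ _)
    · push_neg at hsmall
      have hsa : s + (a + 1) = s + a + 1 := by ring
      have := ramsey (s + a + 1) s (a + 1) G (by omega) (by rw [hsa]; exact hsmall)
      rcases this with ⟨C, hC, hCs⟩ | ⟨l, hln, hlv, hlp, hll⟩
      · -- remove the clique and recurse
        have hCsub : C ⊆ G.verts := hC.1
        set G' := G.induce (G.verts \ C) with hG'
        have hG'verts : G'.verts = G.verts \ C :=
          Finset.inter_eq_left.2 (Finset.sdiff_subset)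
        have hG'card : G'.verts.card = G.verts.card - C.card := by
          rw [hG'verts, Finset.card_sdiff_of_subset hCsub]
        have hcard_le : G'.verts.card ≤ n := by
          have h1 : 1 ≤ C.card := by omega
          omega
        have hmais' : G'.mais ≤ a := le_trans (G.induce_mais_le _) ha
        have hrec := ih G' hcard_le hmais'
        obtain ⟨𝒞', h𝒞'card, h𝒞'cl, h𝒞'cov⟩ := G'.cover_exists
        have hccG : G.cc ≤ (insert C 𝒞').card := by
          refine cc_le_of_cover ?_ ?_
          · intro C' hC'
            rcases Finset.mem_insert.1 hC' with rfl | h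
            · exact hC
            · exact induce_clique (h𝒞'cl C' h)
          · intro w hw
            by_cases hwC : w ∈ C
            · exact ⟨C, Finset.mem_insert_self _ _, hwC⟩
            · have hw' : w ∈ G'.verts := by
                rw [hG'verts]; exact Finset.mem_sdiff.mpr ⟨hw, hwC⟩
              obtain ⟨C', hC', hwC'⟩ := h𝒞'cov w hw'
              exact ⟨C', Finset.mem_insert_of_mem hC', hwC'⟩
        have hkey : G'.verts.card / s + 1 ≤ G.verts.card / s := by
          have h1 : G'.verts.card ≤ G.verts.card - s := by
            rw [hG'card]; exact Nat.sub_le_sub_left hCs _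
          have h2 : G'.verts.card / s ≤ (G.verts.card - s) / s :=
            Nat.div_le_div_right h1
          have hsle : s ≤ G.verts.card := hCs.trans (Finset.card_le_card hCsub)
          have h4 : G.verts.card - s + s = G.verts.card := by omega
          have h3 : (G.verts.card - s) / s + 1 = G.verts.card / s := by
            rw [← Nat.add_div_right _ hs, h4]
          omega
        calc G.cc ≤ (insert C 𝒞').card := hccG
          _ ≤ 𝒞'.card + 1 := Finset.card_insert_le _ _
          _ = G'.cc + 1 := by rw [h𝒞'card]
          _ ≤ G'.verts.card / s + 3 ^ (s + a + 1) + 1 := Nat.add_le_add_right hrec 1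
          _ = G'.verts.card / s + 1 + 3 ^ (s + a + 1) := by ring
          _ ≤ G.verts.card / s + 3 ^ (s + a + 1) := Nat.add_le_add_right hkey _
      · -- impossible: a large acyclic set
        exfalso
        have hacyc := acyclic_of_list hln hlv hlp
        have hcard : l.toFinset.card = l.length := List.toFinset_card_of_nodup hln
        have := card_le_mais hacyc
        omega

lemma two_mul_add_one_le (m : ℕ) : 2 * m + 1 ≤ 3 ^ m := by
  induction m with
  | zero => norm_num
  | succ m ih =>
    have : 1 ≤ 3 ^ m := Nat.one_le_pow _ _ (by norm_num)
    calc 2 * (m + 1) + 1 = 2 * m + 1 + 2 := by ring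
      _ ≤ 3 ^ m + 2 := by omega
      _ ≤ 3 * 3 ^ m := by omega
      _ = 3 ^ (m + 1) := by ring

end Digr

/-- There is a constant `c > 0` such that every digraph `G` on
`n ≥ 2` vertices satisfies `CC(G) ≤ c · (n / log n) · MAIS(G)`. -/
theorem stmt6 : ∃ c : ℝ, 0 < c ∧ ∀ G : Digr, 2 ≤ G.verts.card →
    (G.cc : ℝ) ≤ c * ((G.verts.card : ℝ) / Real.log (G.verts.card : ℝ)) * (G.mais : ℝ) := by
  refine ⟨100, by norm_num, fun G h2 => ?_⟩
  set n := G.verts.card with hn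
  set a := G.mais with ha
  set L := Nat.log 3 n with hL
  have ha1 : 1 ≤ a := Digr.one_le_mais (Finset.card_pos.1 (by omega))
  have hn1R : (1:ℝ) < n := by exact_mod_cast h2.trans_lt' (by norm_num)
  have hnpos : (0:ℝ) < n := by linarith
  have hlogpos : 0 < Real.log n := Real.log_pos hn1R
  have hlog3 : Real.log 3 ≤ 2 := by
    have := Real.log_le_sub_one_of_pos (x := 3) (by norm_num)
    linarith
  have hnlt : n < 3 ^ (L + 1) := Nat.lt_pow_succ_log_self (by norm_num) n
  have hlogn_le : Real.log n ≤ ((L : ℝ) + 1) * 2 := by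
    have h1 : Real.log n ≤ Real.log ((3 : ℝ) ^ (L + 1)) := by
      apply Real.log_le_log hnpos
      have : (n : ℝ) ≤ ((3 ^ (L + 1) : ℕ) : ℝ) := by exact_mod_cast hnlt.le
      simpa using this
    rw [Real.log_pow] at h1
    have : ((L : ℝ) + 1) * Real.log 3 ≤ ((L : ℝ) + 1) * 2 := by
      apply mul_le_mul_of_nonneg_left hlog3
      positivity
    push_cast at h1 ⊢
    linarith
  have ha1R : (1:ℝ) ≤ a := by exact_mod_cast ha1
  have goal_eq : (100 : ℝ) * ((n : ℝ) / Real.log n) * a = (100 * n * a) / Real.log n := by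
    ring
  rw [goal_eq, le_div_iff₀ hlogpos]
  by_cases hc : L ≤ 8 * (a + 1)
  · -- small n relative to a : use the trivial bound cc ≤ n
    have hccn : (G.cc : ℝ) ≤ n := by exact_mod_cast G.cc_le_card
    have hL17 : (L : ℝ) + 1 ≤ 17 * a := by
      have : L + 1 ≤ 17 * a := by omega
      exact_mod_cast this
    have hlog34 : Real.log n ≤ 34 * a := by nlinarith
    have hcc0 : (0:ℝ) ≤ G.cc := Nat.cast_nonneg _
    nlinarith [mul_le_mul hccn hlog34 hlogpos.le hnpos.le]
  · -- large n : use the greedy clique cover bound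
    push_neg at hc
    set s := L / 2 - (a + 1) with hs
    have hs_pos : 0 < s := by omega
    have hsa : s + a + 1 = L / 2 := by omega
    have hL4s : L ≤ 4 * s := by omega
    have hL17 : 17 ≤ L := by omega
    have hLposR : (0:ℝ) < L := by exact_mod_cast (by omega : 0 < L)
    have ccb := Digr.cc_bound a s hs_pos n G le_rfl le_rfl
    rw [hsa] at ccb
    -- 3 ^ (L/2) ≤ n / L
    have hpow2 : 3 ^ (L / 2) * 3 ^ (L / 2) ≤ n := by
      calc 3 ^ (L / 2) * 3 ^ (L / 2) = 3 ^ (L / 2 + L / 2) := (pow_add 3 _ _).symm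
        _ ≤ 3 ^ L := Nat.pow_le_pow_right (by norm_num) (by omega)
        _ ≤ n := Nat.pow_log_le_self 3 (by omega)
    have hLpow : L ≤ 3 ^ (L / 2) := by
      have := Digr.two_mul_add_one_le (L / 2)
      omega
    have hpowL : 3 ^ (L / 2) * L ≤ n :=
      le_trans (Nat.mul_le_mul_left _ hLpow) hpow2
    have hpowR : ((3 ^ (L / 2) : ℕ) : ℝ) ≤ (n : ℝ) / L := by
      rw [le_div_iff₀ hLposR]
      exact_mod_cast hpowL
    -- n / s ≤ 4n / L
    have hdiv1 : ((n / s : ℕ) : ℝ) ≤ (n : ℝ) / s := Nat.cast_div_le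
    have hsposR : (0:ℝ) < s := by exact_mod_cast hs_pos
    have hdiv2 : (n : ℝ) / s ≤ 4 * n / L := by
      rw [div_le_div_iff₀ hsposR hLposR]
      have hL4sR : (L : ℝ) ≤ 4 * s := by exact_mod_cast hL4s
      nlinarith
    have hccle : (G.cc : ℝ) ≤ 5 * n / L := by
      have h1 : (G.cc : ℝ) ≤ ((n / s : ℕ) : ℝ) + ((3 ^ (L / 2) : ℕ) : ℝ) := by
        exact_mod_cast ccb
      have : (4 : ℝ) * n / L + n / L = 5 * n / L := by ring
      linarith [hpowR, hdiv1, hdiv2]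
    have hcc5 : (G.cc : ℝ) * L ≤ 5 * n := by
      have := mul_le_mul_of_nonneg_right hccle hLposR.le
      rwa [div_mul_cancel₀] at this
      exact hLposR.ne'
    have hL17R : (17:ℝ) ≤ L := by exact_mod_cast hL17
    have hlog4L : Real.log n ≤ 4 * L := by linarith
    have hcc0 : (0:ℝ) ≤ G.cc := Nat.cast_nonneg _
    have e1 : (G.cc : ℝ) * Real.log n ≤ (G.cc : ℝ) * (4 * L) :=
      mul_le_mul_of_nonneg_left hlog4L hcc0
    have e4 : (20:ℝ) * n ≤ 100 * n * a := by
      have := mul_le_mul_of_nonneg_left ha1R (by positivity : (0:ℝ) ≤ 100 * n)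
      nlinarith
    linarith [e1, hcc5, e4]
end

section
/- Let 𝒢 be a hereditary family of finite simple graphs and let c > 0 and a > 1 be constants such that for all integers s,t ≥ 1, every graph in 𝒢 on at least c·(s·t)^a vertices has a clique of size at least s or an independent set of size at least t. Then there exists a constant C > 0 such that every graph G ∈ 𝒢 on n ≥ 1 vertices satisfies χ̄(G) ≤ C · n^{1-1/a} · α(G). -/
/-- A finite simple graph: a finite vertex set (a finset of naturals) together
with a symmetric irreflexive adjacency relation. -/
structure FGraph where
  verts : Finset ℕ
  Adj : ℕ → ℕ → Prop
  symm : ∀ u v, Adj u v → Adj v u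
  loopless : ∀ v, ¬ Adj v v

namespace FGraph

/-- A clique: a set of pairwise adjacent vertices. -/
def IsClique (G : FGraph) (C : Finset ℕ) : Prop :=
  C ⊆ G.verts ∧ ∀ u ∈ C, ∀ v ∈ C, u ≠ v → G.Adj u v

/-- An independent set: a set of pairwise non-adjacent vertices. -/
def IsIndep (G : FGraph) (I : Finset ℕ) : Prop :=
  I ⊆ G.verts ∧ ∀ u ∈ I, ∀ v ∈ I, u ≠ v → ¬ G.Adj u v

/-- α: the independence number. -/
noncomputable def indepNum (G : FGraph) : ℕ :=
  sSup {k | ∃ I, G.IsIndep I ∧ I.card = k}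

/-- χ̄: the clique cover number, i.e. the minimum number of cliques whose union
is the vertex set. -/
noncomputable def ccNum (G : FGraph) : ℕ :=
  sInf {k | ∃ 𝒞 : Finset (Finset ℕ), 𝒞.card = k ∧ (∀ C ∈ 𝒞, G.IsClique C) ∧
    ∀ v ∈ G.verts, ∃ C ∈ 𝒞, v ∈ C}

/-- The subgraph induced by a set of vertices. -/
def induce (G : FGraph) (S : Finset ℕ) : FGraph where
  verts := S ∩ G.verts
  Adj := fun a b => a ∈ S ∧ b ∈ S ∧ G.Adj a b
  symm := fun u v h => ⟨h.2.1, h.1, G.symm u v h.2.2⟩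
  loopless := fun v h => G.loopless v h.2.2

/-- A family of graphs is hereditary if it is closed under taking induced
subgraphs. -/
def Hereditary (𝒢 : Set FGraph) : Prop :=
  ∀ G ∈ 𝒢, ∀ S ⊆ G.verts, G.induce S ∈ 𝒢

end FGraph


namespace FGraph

lemma indep_bdd (G : FGraph) : BddAbove {k | ∃ I, G.IsIndep I ∧ I.card = k} :=
  ⟨G.verts.card, fun k hk => by
    obtain ⟨I, hI, rfl⟩ := hk
    exact Finset.card_le_card hI.1⟩

lemma card_le_indepNum (G : FGraph) {I : Finset ℕ} (h : G.IsIndep I) :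
    I.card ≤ G.indepNum :=
  le_csSup (indep_bdd G) ⟨I, h, rfl⟩

lemma one_le_indepNum (G : FGraph) (h : G.verts.Nonempty) : 1 ≤ G.indepNum := by
  obtain ⟨v, hv⟩ := h
  have hI : G.IsIndep {v} := by
    refine ⟨Finset.singleton_subset_iff.mpr hv, ?_⟩
    intro u hu w hw huw
    simp only [Finset.mem_singleton] at hu hw
    exact absurd (hu.trans hw.symm) huw
  simpa using card_le_indepNum G hI

lemma indep_of_induce {G : FGraph} {S I : Finset ℕ} (h : (G.induce S).IsIndep I) :
    G.IsIndep I := by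
  obtain ⟨hsub, hadj⟩ := h
  refine ⟨hsub.trans Finset.inter_subset_right, ?_⟩
  intro u hu v hv huv hA
  exact hadj u hu v hv huv ⟨(Finset.mem_inter.mp (hsub hu)).1,
    (Finset.mem_inter.mp (hsub hv)).1, hA⟩

lemma indepNum_induce_le (G : FGraph) (S : Finset ℕ) :
    (G.induce S).indepNum ≤ G.indepNum := by
  have hne : {k | ∃ I, (G.induce S).IsIndep I ∧ I.card = k}.Nonempty :=
    ⟨0, ∅, ⟨by simp [IsIndep], by simp⟩, by simp⟩
  apply csSup_le hne
  rintro k ⟨I, hI, rfl⟩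
  exact card_le_indepNum G (indep_of_induce hI)

lemma clique_of_induce {G : FGraph} {S C : Finset ℕ} (h : (G.induce S).IsClique C) :
    G.IsClique C := by
  obtain ⟨hsub, hadj⟩ := h
  exact ⟨hsub.trans Finset.inter_subset_right,
    fun u hu v hv huv => (hadj u hu v hv huv).2.2⟩

lemma cover_mem_card (G : FGraph) :
    G.verts.card ∈ {k | ∃ 𝒞 : Finset (Finset ℕ), 𝒞.card = k ∧ (∀ C ∈ 𝒞, G.IsClique C) ∧
      ∀ v ∈ G.verts, ∃ C ∈ 𝒞, v ∈ C} := by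
  refine ⟨G.verts.image (fun v => ({v} : Finset ℕ)), ?_, ?_, ?_⟩
  · rw [Finset.card_image_of_injective _ (fun x y h => by simpa using h)]
  · intro C hC
    obtain ⟨v, hv, rfl⟩ := Finset.mem_image.mp hC
    refine ⟨Finset.singleton_subset_iff.mpr hv, ?_⟩
    intro u hu w hw huw
    simp only [Finset.mem_singleton] at hu hw
    exact absurd (hu.trans hw.symm) huw
  · intro v hv
    exact ⟨{v}, Finset.mem_image_of_mem _ hv, Finset.mem_singleton_self v⟩

lemma ccNum_le_card (G : FGraph) : G.ccNum ≤ G.verts.card :=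
  Nat.sInf_le (cover_mem_card G)

lemma exists_cover (G : FGraph) :
    ∃ 𝒞 : Finset (Finset ℕ), 𝒞.card = G.ccNum ∧ (∀ C ∈ 𝒞, G.IsClique C) ∧
      ∀ v ∈ G.verts, ∃ C ∈ 𝒞, v ∈ C := by
  have : G.ccNum ∈ {k | ∃ 𝒞 : Finset (Finset ℕ), 𝒞.card = k ∧ (∀ C ∈ 𝒞, G.IsClique C) ∧
      ∀ v ∈ G.verts, ∃ C ∈ 𝒞, v ∈ C} :=
    Nat.sInf_mem ⟨G.verts.card, cover_mem_card G⟩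
  exact this

lemma ccNum_remove (G : FGraph) {K : Finset ℕ} (hK : G.IsClique K) :
    G.ccNum ≤ (G.induce (G.verts \ K)).ccNum + 1 := by
  set G' := G.induce (G.verts \ K) with hG'
  obtain ⟨𝒞, hcard, hcl, hcov⟩ := exists_cover G'
  have hmem : (insert K 𝒞).card ∈ {k | ∃ 𝒞 : Finset (Finset ℕ), 𝒞.card = k ∧
      (∀ C ∈ 𝒞, G.IsClique C) ∧ ∀ v ∈ G.verts, ∃ C ∈ 𝒞, v ∈ C} := by
    refine ⟨insert K 𝒞, rfl, ?_, ?_⟩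
    · intro C hC
      rcases Finset.mem_insert.mp hC with rfl | hC
      · exact hK
      · exact clique_of_induce (hcl C hC)
    · intro v hv
      by_cases hvK : v ∈ K
      · exact ⟨K, Finset.mem_insert_self _ _, hvK⟩
      · have hv' : v ∈ G'.verts := by
          simp only [hG', induce, Finset.mem_inter, Finset.mem_sdiff]
          exact ⟨⟨hv, hvK⟩, hv⟩
        obtain ⟨C, hC, hvC⟩ := hcov v hv'
        exact ⟨C, Finset.mem_insert_of_mem hC, hvC⟩
  calc G.ccNum ≤ (insert K 𝒞).card := Nat.sInf_le hmem
    _ ≤ 𝒞.card + 1 := Finset.card_insert_le _ _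
    _ = G'.ccNum + 1 := by rw [hcard]

end FGraph

open Real in
lemma sub_rpow_le_aux {x m b : ℝ} (hx : 0 < x) (hm : 0 ≤ m) (hmx : m ≤ x)
    (hb0 : 0 ≤ b) (hb1 : b ≤ 1) :
    (x - m) ^ b ≤ x ^ b - b * m * x ^ (b - 1) := by
  have hs : (-1 : ℝ) ≤ -(m / x) := by
    rw [neg_le_neg_iff]
    exact (div_le_one hx).mpr hmx
  have h := rpow_one_add_le_one_add_mul_self hs hb0 hb1
  have h1 : (1 : ℝ) + -(m / x) = (x - m) / x := by field_simp; ring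
  rw [h1] at h
  have hxm : 0 ≤ x - m := by linarith
  rw [div_rpow hxm hx.le] at h
  have h2 := mul_le_mul_of_nonneg_right h (rpow_nonneg hx.le b)
  rw [div_mul_cancel₀ _ (by positivity : x ^ b ≠ 0)] at h2
  calc (x - m) ^ b ≤ (1 + b * -(m / x)) * x ^ b := h2
    _ = x ^ b - b * m * (x ^ b / x) := by field_simp; ring
    _ = x ^ b - b * m * x ^ (b - 1) := by
        rw [← Real.rpow_sub_one hx.ne']

open Real FGraph in
lemma key_induction (𝒢 : Set FGraph) (h𝒢 : FGraph.Hereditary 𝒢) (c a : ℝ)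
    (hc : 0 < c) (ha : 1 < a)
    (hRamsey : ∀ s t : ℕ, 1 ≤ s → 1 ≤ t → ∀ G ∈ 𝒢,
      c * ((s : ℝ) * (t : ℝ)) ^ a ≤ (G.verts.card : ℝ) →
      (∃ C : Finset ℕ, G.IsClique C ∧ s ≤ C.card) ∨
      (∃ I : Finset ℕ, G.IsIndep I ∧ t ≤ I.card)) :
    ∀ n : ℕ, ∀ G ∈ 𝒢, G.verts.card = n → ∀ t : ℕ, 1 ≤ t → G.indepNum < t →
      (G.ccNum : ℝ) ≤ (2 * c ^ (1/a) / (1 - 1/a)) * (n : ℝ) ^ (1 - 1/a) * t := by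
  have ha0 : (0:ℝ) < a := by linarith
  have hane : a ≠ 0 := ha0.ne'
  set b : ℝ := 1 - 1/a with hbdef
  have hb0 : 0 < b := by
    have : 1/a < 1 := by rw [div_lt_one ha0]; exact ha
    simp only [hbdef]; linarith
  have hb1 : b < 1 := by
    have : 0 < 1/a := by positivity
    simp only [hbdef]; linarith
  have hca : (0:ℝ) < c ^ (1/a) := rpow_pos_of_pos hc _
  set Cc : ℝ := 2 * c ^ (1/a) / b with hCcdef
  have hCc0 : 0 < Cc := by positivity
  have hCcge : 2 * c ^ (1/a) ≤ Cc := by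
    rw [hCcdef, le_div_iff₀ hb0]
    have := mul_le_mul_of_nonneg_left hb1.le (by positivity : (0:ℝ) ≤ 2 * c ^ (1/a))
    linarith
  intro n
  induction n using Nat.strong_induction_on with
  | _ n IH =>
    intro G hG hn t ht htα
    have ht0 : (0:ℝ) < t := by exact_mod_cast ht
    rcases Nat.eq_zero_or_pos n with rfl | hn1
    · have : G.ccNum = 0 := Nat.le_zero.mp (hn ▸ ccNum_le_card G)
      rw [this]
      simp [Real.zero_rpow hb0.ne']
    have hnR : (0:ℝ) < n := by exact_mod_cast hn1
    by_cases hsmall : (n : ℝ) < 2 ^ a * c * (t:ℝ) ^ a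
    · -- small case: ccNum ≤ n ≤ 2 c^{1/a} t n^b
      have h1 : (G.ccNum : ℝ) ≤ n := by exact_mod_cast hn ▸ ccNum_le_card G
      have hsplit : (n:ℝ) = (n:ℝ) ^ (1/a) * (n:ℝ) ^ b := by
        rw [← Real.rpow_add hnR]
        norm_num [hbdef]
      have h2 : (n:ℝ) ^ (1/a) ≤ 2 * c ^ (1/a) * t := by
        have := Real.rpow_le_rpow (by positivity) hsmall.le (by positivity : (0:ℝ) ≤ 1/a)
        calc (n:ℝ) ^ (1/a) ≤ (2 ^ a * c * (t:ℝ) ^ a) ^ (1/a) := this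
          _ = 2 * c ^ (1/a) * t := by
            rw [Real.mul_rpow (by positivity) (by positivity),
              Real.mul_rpow (by positivity) hc.le,
              ← Real.rpow_mul (by norm_num : (0:ℝ) ≤ 2),
              ← Real.rpow_mul (by positivity : (0:ℝ) ≤ (t:ℝ)),
              mul_one_div_cancel hane, Real.rpow_one, Real.rpow_one]
      have hnb : (0:ℝ) ≤ (n:ℝ) ^ b := by positivity
      calc (G.ccNum : ℝ) ≤ (n:ℝ) := h1
        _ = (n:ℝ) ^ (1/a) * (n:ℝ) ^ b := hsplit
        _ ≤ (2 * c ^ (1/a) * t) * (n:ℝ) ^ b := by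
            exact mul_le_mul_of_nonneg_right h2 hnb
        _ ≤ Cc * (n:ℝ) ^ b * t := by
            have := mul_le_mul_of_nonneg_right hCcge (mul_nonneg hnb ht0.le)
            linarith
    · -- big case
      push_neg at hsmall
      set P : ℝ := (n:ℝ) ^ (1/a) with hPdef
      have hP0 : 0 < P := rpow_pos_of_pos hnR _
      set x : ℝ := ((n:ℝ)/c) ^ (1/a) / t with hxdef
      have hPc : ((n:ℝ)/c) ^ (1/a) = P / c ^ (1/a) := by
        rw [Real.div_rpow hnR.le hc.le]
      have hx2 : 2 ≤ x := by
        have h1 : (2*(t:ℝ)) ^ a ≤ (n:ℝ)/c := by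
          rw [Real.mul_rpow (by norm_num) ht0.le, le_div_iff₀ hc]
          nlinarith
        have h2 := Real.rpow_le_rpow (by positivity) h1 (by positivity : (0:ℝ) ≤ 1/a)
        rw [← Real.rpow_mul (by positivity : (0:ℝ) ≤ 2*(t:ℝ)),
          mul_one_div_cancel hane, Real.rpow_one] at h2
        rw [hxdef, le_div_iff₀ ht0]
        linarith
      have hx0 : 0 ≤ x := by linarith
      set s : ℕ := ⌊x⌋₊ with hsdef
      have hs2 : 2 ≤ s := Nat.le_floor (by exact_mod_cast hx2)
      have hsx : (s:ℝ) ≤ x := Nat.floor_le hx0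
      have hxs : x / 2 ≤ (s:ℝ) := by
        have h1 : x < s + 1 := Nat.lt_floor_add_one x
        have h2 : (1:ℝ) ≤ s := by exact_mod_cast hs2.trans' (by norm_num)
        linarith
      have hs1 : 1 ≤ s := hs2.trans' (by norm_num)
      -- Ramsey applies
      have hram : c * ((s : ℝ) * (t : ℝ)) ^ a ≤ (G.verts.card : ℝ) := by
        have hst : (s:ℝ) * t ≤ ((n:ℝ)/c) ^ (1/a) := by
          have := mul_le_mul_of_nonneg_right hsx ht0.le
          rwa [hxdef, div_mul_cancel₀ _ ht0.ne'] at this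
        have h2 := Real.rpow_le_rpow (by positivity) hst ha0.le
        rw [← Real.rpow_mul (by positivity : (0:ℝ) ≤ (n:ℝ)/c),
          one_div_mul_cancel hane, Real.rpow_one] at h2
        rw [hn]
        calc c * ((s:ℝ) * t) ^ a ≤ c * ((n:ℝ)/c) := by
              exact mul_le_mul_of_nonneg_left h2 hc.le
          _ = n := by field_simp
      rcases hRamsey s t hs1 ht G hG hram with ⟨K, hK, hsK⟩ | ⟨I, hI, htI⟩
      · -- clique case
        set m : ℕ := K.card with hmdef
        have hmn : m ≤ n := hn ▸ Finset.card_le_card hK.1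
        have hm1 : 1 ≤ m := hs1.trans hsK
        set G' := G.induce (G.verts \ K) with hG'def
        have hG' : G' ∈ 𝒢 := h𝒢 G hG _ (Finset.sdiff_subset)
        have hG'card : G'.verts.card = n - m := by
          have : G'.verts = G.verts \ K := by
            simp only [hG'def, induce]
            exact Finset.inter_eq_left.mpr Finset.sdiff_subset
          rw [this, Finset.card_sdiff_of_subset hK.1, hn]
        have hlt : n - m < n := Nat.sub_lt hn1 hm1
        have hα' : G'.indepNum < t := lt_of_le_of_lt (indepNum_induce_le G _) htα
        have hIH := IH (n - m) hlt G' hG' hG'card t ht hα'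
        have hcc : (G.ccNum : ℝ) ≤ (G'.ccNum : ℝ) + 1 := by
          exact_mod_cast ccNum_remove G hK
        have hcastsub : ((n - m : ℕ) : ℝ) = (n:ℝ) - m := Nat.cast_sub hmn
        rw [hcastsub] at hIH
        -- Bernoulli
        have hmR : (0:ℝ) ≤ m := by positivity
        have hmnR : (m:ℝ) ≤ n := by exact_mod_cast hmn
        have hBern : ((n:ℝ) - m) ^ b ≤ (n:ℝ) ^ b - b * m * (n:ℝ) ^ (b - 1) :=
          sub_rpow_le_aux hnR hmR hmnR hb0.le hb1.le
        -- key: 1 ≤ Cc * b * t * m * n^(b-1)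
        have hnb1 : (n:ℝ) ^ (b - 1) = 1 / P := by
          rw [hPdef, one_div, ← Real.rpow_neg hnR.le]
          congr 1
          simp only [hbdef]; ring
        have hmlow : P / c ^ (1/a) / (2 * t) ≤ (m:ℝ) := by
          have hsm : (s:ℝ) ≤ m := by exact_mod_cast hsK
          calc P / c ^ (1/a) / (2*t) = x / 2 := by
                rw [hxdef, hPc]; ring
            _ ≤ (s:ℝ) := hxs
            _ ≤ m := hsm
        have hkey : 1 ≤ Cc * b * ((t:ℝ) * ((m:ℝ) * (n:ℝ) ^ (b - 1))) := by
          rw [hnb1]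
          have heq : Cc * b * ((t:ℝ) * ((P / c ^ (1/a) / (2*t)) * (1/P))) = 1 := by
            rw [hCcdef]
            field_simp
          have h1 : (P / c ^ (1/a) / (2*t)) * (1/P) ≤ (m:ℝ) * (1/P) :=
            mul_le_mul_of_nonneg_right hmlow (one_div_nonneg.mpr hP0.le)
          have h2 := mul_le_mul_of_nonneg_left h1 ht0.le
          have h3 := mul_le_mul_of_nonneg_left h2 (mul_nonneg hCc0.le hb0.le)
          linarith
        -- assemble
        have hmul := mul_le_mul_of_nonneg_right hBern
          (by positivity : (0:ℝ) ≤ Cc * t)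
        calc (G.ccNum : ℝ) ≤ (G'.ccNum : ℝ) + 1 := hcc
          _ ≤ Cc * ((n:ℝ) - m) ^ b * t + 1 := by linarith
          _ ≤ Cc * (n:ℝ) ^ b * t := by linarith
      · -- independent set case: contradiction
        exfalso
        have := card_le_indepNum G hI
        omega

/-- Let 𝒢 be a hereditary family of graphs and `c > 0`,
`a > 1` such that for all `s,t ≥ 1`, every graph in 𝒢 on at least `c·(s·t)^a`
vertices has a clique of size ≥ `s` or an independent set of size ≥ `t`. Then
there is a constant `C > 0` such that every `G ∈ 𝒢` on `n ≥ 1` vertices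
satisfies `χ̄(G) ≤ C · n^(1-1/a) · α(G)`. -/
theorem stmt11 (𝒢 : Set FGraph) (h𝒢 : FGraph.Hereditary 𝒢) (c a : ℝ)
    (hc : 0 < c) (ha : 1 < a)
    (hRamsey : ∀ s t : ℕ, 1 ≤ s → 1 ≤ t → ∀ G ∈ 𝒢,
      c * ((s : ℝ) * (t : ℝ)) ^ a ≤ (G.verts.card : ℝ) →
      (∃ C : Finset ℕ, G.IsClique C ∧ s ≤ C.card) ∨
      (∃ I : Finset ℕ, G.IsIndep I ∧ t ≤ I.card)) :
    ∃ C : ℝ, 0 < C ∧ ∀ G ∈ 𝒢, 1 ≤ G.verts.card →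
      (G.ccNum : ℝ) ≤ C * (G.verts.card : ℝ) ^ (1 - 1 / a) * (G.indepNum : ℝ) := by
  have ha0 : (0:ℝ) < a := by linarith
  have hb0 : 0 < 1 - 1/a := by
    have : 1/a < 1 := by rw [div_lt_one ha0]; exact ha
    linarith
  have hca : (0:ℝ) < c ^ (1/a) := Real.rpow_pos_of_pos hc _
  refine ⟨2 * (2 * c ^ (1/a) / (1 - 1/a)), by positivity, ?_⟩
  intro G hG hcard
  have hne : G.verts.Nonempty := Finset.card_pos.mp hcard
  have hα1 : 1 ≤ G.indepNum := FGraph.one_le_indepNum G hne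
  have hk := key_induction 𝒢 h𝒢 c a hc ha hRamsey G.verts.card G hG rfl
    (G.indepNum + 1) (by omega) (by omega)
  have h2 : ((G.indepNum + 1 : ℕ) : ℝ) ≤ 2 * G.indepNum := by
    have : (1:ℝ) ≤ G.indepNum := by exact_mod_cast hα1
    push_cast
    linarith
  have hnb : (0:ℝ) ≤ (G.verts.card : ℝ) ^ (1 - 1/a) := Real.rpow_nonneg (by positivity) _
  have hCc : (0:ℝ) ≤ 2 * c ^ (1/a) / (1 - 1/a) := by positivity
  calc (G.ccNum : ℝ)
      ≤ (2 * c ^ (1/a) / (1 - 1/a)) * (G.verts.card : ℝ) ^ (1 - 1/a)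
        * ((G.indepNum + 1 : ℕ) : ℝ) := hk
    _ ≤ (2 * c ^ (1/a) / (1 - 1/a)) * (G.verts.card : ℝ) ^ (1 - 1/a)
        * (2 * G.indepNum) :=
        mul_le_mul_of_nonneg_left h2 (by positivity)
    _ = 2 * (2 * c ^ (1/a) / (1 - 1/a)) * (G.verts.card : ℝ) ^ (1 - 1/a)
        * G.indepNum := by ring
end
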